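/- Let q_1,...,q_n be feasible for the improved linear program. Then the positive reals p_k = k^{3/2}·e^{q_k}, k = 1,...,n, are feasible for the improved optimization problem. -/

import Mathlib

open BigOperators

/-- Positive reals `p 1, ..., p n` are feasible for the improved optimization
problem (Program 3.5): Wilkinson's constraints
`∏_{i=1}^k p_i ≤ k^{k/2} p_k^k` for `k = 1, ..., n`, together with
`∏_{i=1}^k p_i ≤ k^k p_{k+ℓ}^{k-ℓ} (p_k + p_{k+ℓ})^ℓ / ((k-ℓ)^{(k-ℓ)/2} ℓ^{ℓ/2})`
for `k = 2, ..., n-1` and `ℓ = 1, ..., min (k-1) (n-k)`. -/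
def ImpOptFeasible (n : ℕ) (p : ℕ → ℝ) : Prop :=
  (∀ k : ℕ, 1 ≤ k → k ≤ n → 0 < p k) ∧
  (∀ k : ℕ, 1 ≤ k → k ≤ n →
    ∏ i ∈ Finset.Icc 1 k, p i ≤ (k : ℝ) ^ ((k : ℝ) / 2) * p k ^ k) ∧
  (∀ k ℓ : ℕ, 2 ≤ k → k + 1 ≤ n → 1 ≤ ℓ → ℓ + 1 ≤ k → k + ℓ ≤ n →
    ∏ i ∈ Finset.Icc 1 k, p i ≤
      (k : ℝ) ^ (k : ℝ) * p (k + ℓ) ^ (k - ℓ) * (p k + p (k + ℓ)) ^ ℓ /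
        (((k : ℝ) - (ℓ : ℝ)) ^ (((k : ℝ) - (ℓ : ℝ)) / 2) * (ℓ : ℝ) ^ ((ℓ : ℝ) / 2)))

/-- Reals `q 1, ..., q n` are feasible for the improved linear program
(Program 3.8): `∑_{i=1}^k q_i ≤ (k/2) ln k + k q_k` for `k = 1, ..., n`, and
`∑_{i=1}^k q_i ≤ (k/2) ln (11k/4) + (k-ℓ) q_{k+ℓ} + ℓ q_k`
for `k = 2, ..., n-1` and `ℓ = 1, ..., min (k-1) (n-k)`. -/
def ImpLPFeasible (n : ℕ) (q : ℕ → ℝ) : Prop :=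
  (∀ k : ℕ, 1 ≤ k → k ≤ n →
    ∑ i ∈ Finset.Icc 1 k, q i ≤ ((k : ℝ) / 2) * Real.log k + (k : ℝ) * q k) ∧
  (∀ k ℓ : ℕ, 2 ≤ k → k + 1 ≤ n → 1 ≤ ℓ → ℓ + 1 ≤ k → k + ℓ ≤ n →
    ∑ i ∈ Finset.Icc 1 k, q i ≤
      ((k : ℝ) / 2) * Real.log (11 * (k : ℝ) / 4) +
        ((k : ℝ) - (ℓ : ℝ)) * q (k + ℓ) + (ℓ : ℝ) * q k)

/-! Taking logarithms, `∏_{i ≤ k} p_i = (k!)^{3/2} e^{∑ q_i}`, so each constraint on `p` is the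
corresponding constraint on `q` plus an inequality about `k!` alone. For the first family this is
`k! ≤ k^k`. For the second, drop `p_{k+ℓ}` from `p_k + p_{k+ℓ}` and use `ℓ, k - ℓ ≤ k ≤ k + ℓ`;
what remains is `(k!)^3 · 11^k ≤ 4^k · k^{3k}` for `k ≥ 2`, which follows by induction from
`(1 + 1/k)^k ≥ 2`. -/

open Real
open scoped Nat

theorem two_mul_pow_self_le_succ_pow {k : ℕ} (hk : 1 ≤ k) : 2 * k ^ k ≤ (k + 1) ^ k := by
  have h := pow_add_mul_le_add_pow (a := k) (b := 1) (Nat.zero_le _) (by omega) k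
  obtain ⟨j, rfl⟩ : ∃ j, k = j + 1 := ⟨k - 1, by omega⟩
  simpa [pow_succ', two_mul] using h

theorem factorial_pow_three_mul_eleven_pow_le {k : ℕ} (hk : 2 ≤ k) :
    k ! ^ 3 * 11 ^ k ≤ 4 ^ k * k ^ (3 * k) := by
  induction k, hk using Nat.le_induction with
  | base => decide
  | succ k hk ih =>
    have h8 : 8 * k ^ (3 * k) ≤ (k + 1) ^ (3 * k) := by
      have := Nat.pow_le_pow_left (two_mul_pow_self_le_succ_pow (k := k) (by omega)) 3
      rw [mul_pow, ← pow_mul', ← pow_mul'] at this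
      simpa using this
    calc (k + 1)! ^ 3 * 11 ^ (k + 1) = (k + 1) ^ 3 * (k ! ^ 3 * 11 ^ k) * 11 := by
          rw [Nat.factorial_succ]; ring
      _ ≤ (k + 1) ^ 3 * (4 ^ k * k ^ (3 * k)) * 11 := by gcongr
      _ ≤ (k + 1) ^ 3 * 4 ^ k * (4 * (8 * k ^ (3 * k))) := by ring_nf; omega
      _ ≤ (k + 1) ^ 3 * 4 ^ k * (4 * (k + 1) ^ (3 * k)) := by gcongr
      _ = 4 ^ (k + 1) * (k + 1) ^ (3 * (k + 1)) := by ring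

theorem three_mul_log_factorial_add_le {k : ℕ} (hk : 2 ≤ k) :
    3 * log k ! + k * log (11 / 4) ≤ 3 * k * log k := by
  have hk0 : (0 : ℝ) < k := by positivity
  have h := log_le_log (by positivity) (Nat.cast_le.mpr (factorial_pow_three_mul_eleven_pow_le hk))
  push_cast at h
  rw [log_mul (by positivity) (by positivity), log_mul (by positivity) (by positivity),
    log_pow, log_pow, log_pow, log_pow] at h
  push_cast at h
  rw [log_div (by norm_num) (by norm_num)]
  linarith

theorem log_factorial_le_mul_log (k : ℕ) : log k ! ≤ k * log k := by
  rw [← log_pow]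
  exact log_le_log (by positivity) (by exact_mod_cast Nat.factorial_le_pow k)

theorem log_rpow_mul_exp {x : ℝ} (hx : 0 < x) (a y : ℝ) : log (x ^ a * exp y) = a * log x + y := by
  rw [log_mul (by positivity) (exp_ne_zero y), log_rpow hx, log_exp]

theorem prod_Icc_rpow_mul_exp (a : ℝ) (q : ℕ → ℝ) (k : ℕ) :
    ∏ i ∈ Finset.Icc 1 k, ((i : ℝ) ^ a * exp (q i)) =
      (k ! : ℝ) ^ a * exp (∑ i ∈ Finset.Icc 1 k, q i) := by
  rw [Finset.prod_mul_distrib, ← exp_sum, finsetProd_rpow _ _ (fun i _ => by positivity),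
    ← Nat.cast_prod, ← Finset.Ico_add_one_right_eq_Icc, Finset.prod_Ico_id_eq_factorial]

noncomputable def optOfLP (q : ℕ → ℝ) (k : ℕ) : ℝ := (k : ℝ) ^ ((3 : ℝ) / 2) * exp (q k)

section

variable (q : ℕ → ℝ)

theorem optOfLP_pos {k : ℕ} (hk : 1 ≤ k) : 0 < optOfLP q k := by
  unfold optOfLP; positivity

theorem log_optOfLP {k : ℕ} (hk : 1 ≤ k) : log (optOfLP q k) = 3 / 2 * log k + q k :=
  log_rpow_mul_exp (by positivity) _ _

theorem prod_optOfLP_pos (k : ℕ) : 0 < ∏ i ∈ Finset.Icc 1 k, optOfLP q i :=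
  Finset.prod_pos fun _ hi => optOfLP_pos q (Finset.mem_Icc.1 hi).1

theorem log_prod_optOfLP (k : ℕ) :
    log (∏ i ∈ Finset.Icc 1 k, optOfLP q i) = 3 / 2 * log k ! + ∑ i ∈ Finset.Icc 1 k, q i := by
  unfold optOfLP
  rw [prod_Icc_rpow_mul_exp, log_rpow_mul_exp (by positivity)]

theorem prod_optOfLP_le_wilkinson {k : ℕ} (hk : 1 ≤ k)
    (hq : ∑ i ∈ Finset.Icc 1 k, q i ≤ ((k : ℝ) / 2) * log k + k * q k) :
    ∏ i ∈ Finset.Icc 1 k, optOfLP q i ≤ (k : ℝ) ^ ((k : ℝ) / 2) * optOfLP q k ^ k := by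
  have hk0 : (0 : ℝ) < k := by positivity
  have hpk := optOfLP_pos q hk
  rw [← log_le_log_iff (prod_optOfLP_pos q k) (by positivity), log_prod_optOfLP,
    log_mul (by positivity) (by positivity), log_pow, log_rpow hk0, log_optOfLP q hk]
  linarith [log_factorial_le_mul_log k]

theorem prod_optOfLP_le_improved {k ℓ : ℕ} (hk : 2 ≤ k) (hℓ : 1 ≤ ℓ) (hℓk : ℓ + 1 ≤ k)
    (hq : ∑ i ∈ Finset.Icc 1 k, q i ≤
      ((k : ℝ) / 2) * log (11 * (k : ℝ) / 4) + ((k : ℝ) - ℓ) * q (k + ℓ) + ℓ * q k) :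
    ∏ i ∈ Finset.Icc 1 k, optOfLP q i ≤
      (k : ℝ) ^ (k : ℝ) * optOfLP q (k + ℓ) ^ (k - ℓ) * (optOfLP q k + optOfLP q (k + ℓ)) ^ ℓ /
        (((k : ℝ) - ℓ) ^ (((k : ℝ) - ℓ) / 2) * (ℓ : ℝ) ^ ((ℓ : ℝ) / 2)) := by
  have hk0 : (0 : ℝ) < k := by positivity
  have hℓ0 : (0 : ℝ) < ℓ := by positivity
  have hkℓ : (ℓ : ℝ) + 1 ≤ k := by exact_mod_cast hℓk
  have hpk := optOfLP_pos q (k := k) (by omega)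
  have hpm := optOfLP_pos q (k := k + ℓ) (by omega)
  have hkℓ0 : (0 : ℝ) < k - ℓ := by linarith
  calc ∏ i ∈ Finset.Icc 1 k, optOfLP q i ≤
        (k : ℝ) ^ (k : ℝ) * optOfLP q (k + ℓ) ^ (k - ℓ) * optOfLP q k ^ ℓ /
          (((k : ℝ) - ℓ) ^ (((k : ℝ) - ℓ) / 2) * (ℓ : ℝ) ^ ((ℓ : ℝ) / 2)) := by
        rw [← log_le_log_iff (prod_optOfLP_pos q k) (by positivity), log_prod_optOfLP,
          log_div (by positivity) (by positivity), log_mul (by positivity) (by positivity),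
          log_mul (by positivity) (by positivity), log_mul (by positivity) (by positivity),
          log_rpow hk0, log_rpow hkℓ0, log_rpow hℓ0,
          log_pow, log_pow, log_optOfLP q (by omega), log_optOfLP q (by omega),
          Nat.cast_sub (by omega), Nat.cast_add]
        rw [show (11 : ℝ) * k / 4 = 11 / 4 * k by ring, log_mul (by norm_num) hk0.ne'] at hq
        have hkey := three_mul_log_factorial_add_le hk
        have h1 : log (k - ℓ) ≤ log k := log_le_log hkℓ0 (by linarith)
        have h2 : log ℓ ≤ log k := log_le_log hℓ0 (by linarith)
        have h3 : log k ≤ log (k + ℓ) := log_le_log hk0 (by linarith)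
        linarith [mul_le_mul_of_nonneg_left h1 (by linarith : (0 : ℝ) ≤ (k - ℓ) / 2),
          mul_le_mul_of_nonneg_left h2 (by linarith : (0 : ℝ) ≤ ℓ / 2),
          mul_le_mul_of_nonneg_left h3 (by linarith : (0 : ℝ) ≤ 3 / 2 * (k - ℓ))]
    _ ≤ _ := by gcongr; linarith

end

/-- Proposition 3.9 (feasibility direction): if `q` is feasible for the
improved linear program, then `p_k = k^{3/2} e^{q_k}` is feasible for the
improved optimization problem. -/
theorem impLP_to_impOpt (n : ℕ) (q : ℕ → ℝ) (hq : ImpLPFeasible n q) :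
    ImpOptFeasible n (fun k => (k : ℝ) ^ ((3 : ℝ) / 2) * Real.exp (q k)) := by
  obtain ⟨hwilkinson, himproved⟩ := hq
  exact ⟨fun k hk _ => optOfLP_pos q hk,
    fun k hk hkn => prod_optOfLP_le_wilkinson q hk (hwilkinson k hk hkn),
    fun k ℓ hk hkn hℓ hℓk hkℓn =>
      prod_optOfLP_le_improved q hk hℓ hℓk (himproved k ℓ hk hkn hℓ hℓk hkℓn)⟩
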